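/- arXiv:1507.00881 — 2 statements merged into one kernel-verified Lean document; each statement's English description precedes it below -/
import Mathlib

section
/- For every k ≥ 3, the set S = {u_{2i+1} : 0 ≤ i ≤ k−1} ∪ {u_{2k+i} : 0 ≤ i ≤ 2k} ∪ {v_i : 0 ≤ i ≤ 2k+3} is a strong resolving set of the generalized Petersen graph GP(4k+1, 2). -/
/-- A vertex `w` strongly resolves vertices `u` and `v` in graph `G`:
`u` lies on a shortest `v`–`w` path or `v` lies on a shortest `u`–`w` path,
equivalently via distances. -/
def StronglyResolves {V : Type*} (G : SimpleGraph V) (w u v : V) : Prop :=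
  G.dist w u = G.dist w v + G.dist v u ∨ G.dist w v = G.dist w u + G.dist u v

/-- `S` is a strong resolving set of `G`. -/
def IsStrongResolvingSet {V : Type*} (G : SimpleGraph V) (S : Set V) : Prop :=
  ∀ u v : V, u ≠ v → ∃ w ∈ S, StronglyResolves G w u v

/-- The strong metric dimension: minimum cardinality of a strong resolving set. -/
noncomputable def sdim {V : Type*} (G : SimpleGraph V) : ℕ :=
  sInf {m : ℕ | ∃ S : Set V, IsStrongResolvingSet G S ∧ S.ncard = m}

/-- Mutually maximally distant vertices. -/
def MutuallyMaximallyDistant {V : Type*} (G : SimpleGraph V) (u v : V) : Prop :=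
  u ≠ v ∧ (∀ w : V, G.Adj u w → G.dist w v ≤ G.dist u v) ∧
    (∀ w : V, G.Adj v w → G.dist u w ≤ G.dist u v)

/-- The generalized Petersen graph `GP n k`, with outer vertices `Sum.inl i` (the `uᵢ`)
and inner vertices `Sum.inr i` (the `vᵢ`), indices in `ZMod n`. -/
def GP (n k : ℕ) : SimpleGraph (ZMod n ⊕ ZMod n) where
  Adj x y := match x, y with
    | Sum.inl i, Sum.inl j => i ≠ j ∧ (j = i + 1 ∨ i = j + 1)
    | Sum.inl i, Sum.inr j => i = j
    | Sum.inr i, Sum.inl j => i = j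
    | Sum.inr i, Sum.inr j => i ≠ j ∧ (j = i + (k : ZMod n) ∨ i = j + (k : ZMod n))
  symm := ⟨by rintro (i|i) (j|j) h <;> simp_all <;> tauto⟩
  loopless := ⟨by rintro (i|i) h <;> simp_all⟩


/-!
The proof computes every distance in `GP (4k+1) 2`. If `l ≤ 2k` is the cyclic distance
between the indices `a` and `b`, then `d(u_a, u_b) = min l (⌊l/2⌋ + 2 + l % 2)`,
`d(u_a, v_b) = ⌊l/2⌋ + 1 + l % 2`, and `d(v_a, v_b)` is `l/2` for even `l` and
`min (⌊l/2⌋ + 3) (2k - ⌊l/2⌋)` for odd `l`. Explicit walks give the upper bounds. For the lower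
bounds, each formula, read as a function of the far endpoint, changes by at most one along
every edge, so it is dominated by the graph distance.

The vertices outside `S` are the `u_p` with `p` even and `p < 2k`, and the `v_q` with
`q ≥ 2k + 4`. For each pair of them some `w ∈ S` has one of the two on a geodesic from `w` to
the other: `w` is an odd outer neighbour `u_{p+1}` or `u_{q+1}`, the outer vertex `u_q` next
to `v_q`, or one of `v_0`, `v_1`, `v_p`, and the distance formulas confirm the choice.
-/

open SimpleGraph Sum

namespace SimpleGraph

variable {V : Type*} {G : SimpleGraph V}

theorem le_add_dist_of_forall_adj {f : V → ℕ} (hf : ∀ x y, G.Adj x y → f x ≤ f y + 1)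
    {x y : V} (h : G.Reachable x y) : f x ≤ f y + G.dist x y := by
  obtain ⟨p, hp⟩ := h.exists_walk_length_eq_dist
  rw [← hp]
  clear hp h
  induction p with
  | nil => simp
  | cons hadj _ ih =>
    rw [Walk.length_cons]
    have := hf _ _ hadj
    omega

theorem Connected.dist_le_add_of_le (hG : G.Connected) {u v w : V} {a b : ℕ}
    (h₁ : G.dist u v ≤ a) (h₂ : G.dist v w ≤ b) : G.dist u w ≤ a + b :=
  hG.dist_triangle.trans (add_le_add h₁ h₂)

end SimpleGraph

theorem StronglyResolves.symm {V : Type*} {G : SimpleGraph V} {w u v : V}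
    (h : StronglyResolves G w u v) : StronglyResolves G w v u :=
  Or.symm h

namespace GP

section Generic

variable {n s : ℕ}

def cycDist (n a b : ℕ) : ℕ := min (Nat.dist a b) (n - Nat.dist a b)

/-- The relation between the cyclic distances `l`, `l'` from a fixed point to two points `t`
apart on a cycle of length `n`: the step goes away from the fixed point, towards it, across it,
or across its antipode. -/
def CycStep (n t l l' : ℕ) : Prop := l' = l + t ∨ l = l' + t ∨ l + l' = t ∨ l + l' + t = n

theorem two_mul_cycDist_le (a b : ℕ) : 2 * cycDist n a b ≤ n := by
  unfold cycDist; omega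

theorem cycStep_cycDist {a b b' t : ℕ} (ha : a < n) (hb : b < n) (hb' : b' < n) (ht : 2 * t ≤ n)
    (h : b' = b + t ∨ b' + n = b + t) : CycStep n t (cycDist n a b) (cycDist n a b') := by
  unfold CycStep cycDist Nat.dist; omega

theorem val_eq_add_or_add_eq_add [NeZero n] {i j : ZMod n} {t : ℕ} (ht : t < n) (h : j = i + t) :
    j.val = i.val + t ∨ j.val + n = i.val + t := by
  have hi := i.val_lt
  rw [h, ZMod.val_add, ZMod.val_natCast_of_lt ht]
  rcases lt_or_ge (i.val + t) n with hlt | hge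
  · exact .inl (Nat.mod_eq_of_lt hlt)
  · right
    rw [Nat.mod_eq_sub_mod hge, Nat.mod_eq_of_lt (by omega)]
    omega

theorem natCast_eq_add_cycDist_or {a b : ℕ} (ha : a < n) (hb : b < n) :
    (b : ZMod n) = a + (cycDist n a b : ℕ) ∨ (a : ZMod n) = b + (cycDist n a b : ℕ) := by
  have key {c d l : ℕ} (h : c = d + l ∨ c + n = d + l) : (c : ZMod n) = d + l := by
    rcases h with h | h
    · rw [h, Nat.cast_add]
    · simpa using congrArg (Nat.cast : ℕ → ZMod n) h
  unfold cycDist Nat.dist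
  by_cases h : b = a + min (a - b + (b - a)) (n - (a - b + (b - a))) ∨
      b + n = a + min (a - b + (b - a)) (n - (a - b + (b - a)))
  · exact .inl (key h)
  · exact .inr (key (by omega))

theorem natCast_ne_zero_of_pos_of_lt {m : ℕ} (h0 : 0 < m) (hm : m < n) : (m : ZMod n) ≠ 0 :=
  fun h => h0.ne' (Nat.eq_zero_of_dvd_of_lt ((ZMod.natCast_eq_zero_iff m n).mp h) hm)

theorem natCast_div_two_mul_two_add_mod_two (l : ℕ) :
    ((l / 2 : ℕ) : ZMod n) * (2 : ℕ) + (l % 2 : ℕ) = l := by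
  exact_mod_cast congrArg (Nat.cast : ℕ → ZMod n) (Nat.div_add_mod' l 2)

theorem adj_inl_add_one (h1 : (1 : ZMod n) ≠ 0) (i : ZMod n) :
    (GP n s).Adj (inl i) (inl (i + 1)) :=
  ⟨left_ne_add.mpr h1, Or.inl rfl⟩

theorem adj_inr_add (hs : (s : ZMod n) ≠ 0) (i : ZMod n) :
    (GP n s).Adj (inr i) (inr (i + s)) :=
  ⟨left_ne_add.mpr hs, Or.inl rfl⟩

theorem adj_inl_inr (i : ZMod n) : (GP n s).Adj (inl i) (inr i) := rfl

theorem exists_walk_inl_inl (h1 : (1 : ZMod n) ≠ 0) (i : ZMod n) :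
    ∀ m : ℕ, ∃ p : (GP n s).Walk (inl i) (inl (i + m)), p.length = m
  | 0 => ⟨Walk.nil.copy rfl (by simp), by simp⟩
  | m + 1 => by
    obtain ⟨p, hp⟩ := exists_walk_inl_inl h1 i m
    refine ⟨(p.concat (adj_inl_add_one h1 _)).copy rfl (by push_cast; ring_nf), ?_⟩
    simp [hp]

theorem exists_walk_inr_inr (hs : (s : ZMod n) ≠ 0) (i : ZMod n) :
    ∀ m : ℕ, ∃ p : (GP n s).Walk (inr i) (inr (i + m * s)), p.length = m
  | 0 => ⟨Walk.nil.copy rfl (by simp), by simp⟩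
  | m + 1 => by
    obtain ⟨p, hp⟩ := exists_walk_inr_inr hs i m
    refine ⟨(p.concat (adj_inr_add hs _)).copy rfl (by push_cast; ring_nf), ?_⟩
    simp [hp]

theorem connected [NeZero n] (h1 : (1 : ZMod n) ≠ 0) : (GP n s).Connected := by
  have hinl (i : ZMod n) : (GP n s).Reachable (inl 0) (inl i) := by
    obtain ⟨p, -⟩ := exists_walk_inl_inl (s := s) h1 0 i.val
    simpa using p.reachable
  have hall : ∀ x, (GP n s).Reachable (inl 0) x
    | inl i => hinl i
    | inr i => (hinl i).trans (adj_inl_inr i).reachable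
  exact ⟨fun x y => (hall x).symm.trans (hall y)⟩

theorem dist_inl_inl_le (h1 : (1 : ZMod n) ≠ 0) {i j : ZMod n} {m : ℕ} (h : j = i + m) :
    (GP n s).dist (inl i) (inl j) ≤ m := by
  subst h
  obtain ⟨p, hp⟩ := exists_walk_inl_inl (s := s) h1 i m
  exact (dist_le p).trans hp.le

theorem dist_inr_inr_le (hs : (s : ZMod n) ≠ 0) {i j : ZMod n} {m : ℕ} (h : j = i + m * s) :
    (GP n s).dist (inr i) (inr j) ≤ m := by
  subst h
  obtain ⟨p, hp⟩ := exists_walk_inr_inr hs i m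
  exact (dist_le p).trans hp.le

theorem dist_inl_inr_self (i : ZMod n) : (GP n s).dist (inl i) (inr i) = 1 :=
  dist_eq_one_iff_adj.mpr (adj_inl_inr i)

theorem dist_inr_inl_self (i : ZMod n) : (GP n s).dist (inr i) (inl i) = 1 :=
  dist_eq_one_iff_adj.mpr (adj_inl_inr i).symm

def potential (n a : ℕ) (f g : ℕ → ℕ) : ZMod n ⊕ ZMod n → ℕ :=
  Sum.elim (f ∘ cycDist n a ∘ ZMod.val) (g ∘ cycDist n a ∘ ZMod.val)

theorem potential_le_add_dist [NeZero n] (h1 : (1 : ZMod n) ≠ 0) (hs : 2 * s ≤ n) {a : ℕ}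
    (ha : a < n) {f g : ℕ → ℕ}
    (hf : ∀ l l', 2 * l ≤ n → 2 * l' ≤ n → CycStep n 1 l l' → Nat.dist (f l) (f l') ≤ 1)
    (hfg : ∀ l, 2 * l ≤ n → Nat.dist (f l) (g l) ≤ 1)
    (hg : ∀ l l', 2 * l ≤ n → 2 * l' ≤ n → CycStep n s l l' → Nat.dist (g l) (g l') ≤ 1)
    (x y : ZMod n ⊕ ZMod n) :
    potential n a f g x ≤ potential n a f g y + (GP n s).dist x y := by
  refine le_add_dist_of_forall_adj ?_ ((connected h1).preconnected x y)
  have h1n : 1 < n := by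
    by_contra! h
    obtain rfl : n = 1 := by have := NeZero.pos n; omega
    exact h1 (Subsingleton.elim _ _)
  have hstep {i j : ZMod n} {t : ℕ} (ht : 2 * t ≤ n) (h : j = i + t) :
      CycStep n t (cycDist n a i.val) (cycDist n a j.val) :=
    cycStep_cycDist ha i.val_lt j.val_lt ht (val_eq_add_or_add_eq_add (by omega) h)
  suffices ∀ x y, (GP n s).Adj x y →
      Nat.dist (potential n a f g x) (potential n a f g y) ≤ 1 from
    fun x y hxy => by have := this x y hxy; unfold Nat.dist at this; omega
  rintro (i | i) (j | j) hadj
  · obtain ⟨-, hji | hij⟩ := hadj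
    · exact hf _ _ (two_mul_cycDist_le ..) (two_mul_cycDist_le ..)
        (hstep (by omega) (by simpa using hji))
    · rw [Nat.dist_comm]
      exact hf _ _ (two_mul_cycDist_le ..) (two_mul_cycDist_le ..)
        (hstep (by omega) (by simpa using hij))
  · obtain rfl : i = j := hadj
    exact hfg _ (two_mul_cycDist_le ..)
  · obtain rfl : i = j := hadj
    rw [Nat.dist_comm]
    exact hfg _ (two_mul_cycDist_le ..)
  · obtain ⟨-, hji | hij⟩ := hadj
    · exact hg _ _ (two_mul_cycDist_le ..) (two_mul_cycDist_le ..) (hstep hs hji)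
    · rw [Nat.dist_comm]
      exact hg _ _ (two_mul_cycDist_le ..) (two_mul_cycDist_le ..) (hstep hs hij)

end Generic

section FourKPlusOne

variable {k : ℕ}

def uuDist (l : ℕ) : ℕ := min l (l / 2 + 2 + l % 2)

def uvDist (l : ℕ) : ℕ := l / 2 + 1 + l % 2

def vvDist (k l : ℕ) : ℕ := if l % 2 = 0 then l / 2 else min (l / 2 + 3) (2 * k - l / 2)

theorem one_ne_zero_of_one_le (hk : 1 ≤ k) : (1 : ZMod (4*k+1)) ≠ 0 := by
  simpa using natCast_ne_zero_of_pos_of_lt (n := 4*k+1) (m := 1) one_pos (by omega)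

theorem two_ne_zero_of_one_le (hk : 1 ≤ k) : ((2 : ℕ) : ZMod (4*k+1)) ≠ 0 :=
  natCast_ne_zero_of_pos_of_lt two_pos (by omega)

theorem dist_inl_inl_add_le (hk : 1 ≤ k) (i : ZMod (4*k+1)) (l : ℕ) :
    (GP (4*k+1) 2).dist (inl i) (inl (i + l)) ≤ uuDist l := by
  have h1 := one_ne_zero_of_one_le hk
  have hG := connected (s := 2) h1
  refine le_min (dist_inl_inl_le h1 rfl) ?_
  calc _ ≤ 1 + l / 2 + 1 + l % 2 :=
        hG.dist_le_add_of_le (hG.dist_le_add_of_le (hG.dist_le_add_of_le (dist_inl_inr_self i).le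
          (dist_inr_inr_le (two_ne_zero_of_one_le hk) (m := l / 2) rfl)) (dist_inr_inl_self _).le)
          (dist_inl_inl_le h1 (by rw [add_assoc, natCast_div_two_mul_two_add_mod_two]))
    _ = l / 2 + 2 + l % 2 := by ring

theorem dist_inl_inr_add_le (hk : 1 ≤ k) (i : ZMod (4*k+1)) (l : ℕ) :
    (GP (4*k+1) 2).dist (inl i) (inr (i + l)) ≤ uvDist l := by
  have h1 := one_ne_zero_of_one_le hk
  have hG := connected (s := 2) h1
  calc _ ≤ l % 2 + 1 + l / 2 :=
        hG.dist_le_add_of_le (hG.dist_le_add_of_le (dist_inl_inl_le h1 (m := l % 2) rfl)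
          (dist_inl_inr_self _).le) (dist_inr_inr_le (two_ne_zero_of_one_le hk) (m := l / 2)
            (by rw [add_assoc, add_comm (l % 2 : ℕ).cast, natCast_div_two_mul_two_add_mod_two]))
    _ = uvDist l := by unfold uvDist; ring

theorem dist_inr_inl_add_le (hk : 1 ≤ k) (i : ZMod (4*k+1)) (l : ℕ) :
    (GP (4*k+1) 2).dist (inr i) (inl (i + l)) ≤ uvDist l := by
  have h1 := one_ne_zero_of_one_le hk
  have hG := connected (s := 2) h1
  calc _ ≤ l / 2 + 1 + l % 2 :=
        hG.dist_le_add_of_le (hG.dist_le_add_of_le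
          (dist_inr_inr_le (two_ne_zero_of_one_le hk) (m := l / 2) rfl) (dist_inr_inl_self _).le)
          (dist_inl_inl_le h1 (by rw [add_assoc, natCast_div_two_mul_two_add_mod_two]))
    _ = uvDist l := rfl

theorem dist_inr_inr_add_le (hk : 1 ≤ k) (i : ZMod (4*k+1)) {l : ℕ} (hl : l ≤ 4*k+1) :
    (GP (4*k+1) 2).dist (inr i) (inr (i + l)) ≤ vvDist k l := by
  have h1 := one_ne_zero_of_one_le hk
  have h2 := two_ne_zero_of_one_le hk
  have hG := connected (s := 2) h1
  unfold vvDist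
  split_ifs with hl2
  · exact dist_inr_inr_le h2 (by rw [← natCast_div_two_mul_two_add_mod_two l, hl2]; simp)
  refine le_min ?_ ?_
  · have hl : ((l / 2 : ℕ) : ZMod (4*k+1)) * (2 : ℕ) + (1 : ℕ) = l := by
      rw [← Nat.mod_two_ne_zero.mp hl2]
      exact natCast_div_two_mul_two_add_mod_two l
    calc _ ≤ l / 2 + 1 + 1 + 1 :=
          hG.dist_le_add_of_le (hG.dist_le_add_of_le (hG.dist_le_add_of_le
            (dist_inr_inr_le h2 (m := l / 2) rfl) (dist_inr_inl_self _).le)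
            (dist_inl_inl_le h1 (by rw [add_assoc, hl]))) (dist_inl_inr_self _).le
      _ = l / 2 + 3 := by ring
  · -- the long way round the inner cycle, which takes an even number `4k + 1 - l` of steps
    rw [SimpleGraph.dist_comm]
    refine dist_inr_inr_le h2 ?_
    have : ((l + (2 * k - l / 2) * 2 : ℕ) : ZMod (4*k+1)) = 0 := by
      rw [show l + (2 * k - l / 2) * 2 = 4 * k + 1 by omega]
      exact_mod_cast ZMod.natCast_self (4*k+1)
    push_cast at this
    linear_combination -this

theorem potential_inl_le_dist (hk : 1 ≤ k) {a : ℕ} (ha : a < 4*k+1)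
    (x : ZMod (4*k+1) ⊕ ZMod (4*k+1)) :
    potential (4*k+1) a uuDist uvDist x ≤ (GP (4*k+1) 2).dist (inl a) x := by
  have := potential_le_add_dist (s := 2) (one_ne_zero_of_one_le hk) (by omega) ha
    (f := uuDist) (g := uvDist) ?_ ?_ ?_ x (inl a)
  · simpa [potential, ZMod.val_natCast_of_lt ha, cycDist, uuDist, SimpleGraph.dist_comm]
      using this
  all_goals
    intros
    simp only [CycStep, uuDist, uvDist, Nat.dist] at *
    omega

theorem potential_inr_le_dist (hk : 1 ≤ k) {a : ℕ} (ha : a < 4*k+1)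
    (x : ZMod (4*k+1) ⊕ ZMod (4*k+1)) :
    potential (4*k+1) a uvDist (vvDist k) x ≤ (GP (4*k+1) 2).dist (inr a) x := by
  have := potential_le_add_dist (s := 2) (one_ne_zero_of_one_le hk) (by omega) ha
    (f := uvDist) (g := vvDist k) ?_ ?_ ?_ x (inr a)
  · simpa [potential, ZMod.val_natCast_of_lt ha, cycDist, vvDist, SimpleGraph.dist_comm]
      using this
  · intros
    simp only [CycStep, uvDist, Nat.dist] at *
    omega
  all_goals
    intros
    simp only [CycStep, uvDist, vvDist, Nat.dist] at *
    split_ifs <;> omega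

theorem dist_inl_inl (hk : 1 ≤ k) {a b : ℕ} (ha : a < 4*k+1) (hb : b < 4*k+1) :
    (GP (4*k+1) 2).dist (inl (a : ZMod (4*k+1))) (inl (b : ZMod (4*k+1))) =
      uuDist (cycDist (4*k+1) a b) := by
  refine le_antisymm ?_ (by
    simpa only [potential, Sum.elim_inl, Function.comp_apply, ZMod.val_natCast_of_lt hb]
      using potential_inl_le_dist hk ha (inl b))
  rcases natCast_eq_add_cycDist_or ha hb with h | h
  · rw [h]
    exact dist_inl_inl_add_le hk _ _
  · rw [SimpleGraph.dist_comm, h]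
    exact dist_inl_inl_add_le hk _ _

theorem dist_inl_inr (hk : 1 ≤ k) {a b : ℕ} (ha : a < 4*k+1) (hb : b < 4*k+1) :
    (GP (4*k+1) 2).dist (inl (a : ZMod (4*k+1))) (inr (b : ZMod (4*k+1))) =
      uvDist (cycDist (4*k+1) a b) := by
  refine le_antisymm ?_ (by
    simpa only [potential, Sum.elim_inr, Function.comp_apply, ZMod.val_natCast_of_lt hb]
      using potential_inl_le_dist hk ha (inr b))
  rcases natCast_eq_add_cycDist_or ha hb with h | h
  · rw [h]
    exact dist_inl_inr_add_le hk _ _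
  · rw [SimpleGraph.dist_comm, h]
    exact dist_inr_inl_add_le hk _ _

theorem dist_inr_inr (hk : 1 ≤ k) {a b : ℕ} (ha : a < 4*k+1) (hb : b < 4*k+1) :
    (GP (4*k+1) 2).dist (inr (a : ZMod (4*k+1))) (inr (b : ZMod (4*k+1))) =
      vvDist k (cycDist (4*k+1) a b) := by
  refine le_antisymm ?_ (by
    simpa only [potential, Sum.elim_inr, Function.comp_apply, ZMod.val_natCast_of_lt hb]
      using potential_inr_le_dist hk ha (inr b))
  have := two_mul_cycDist_le (n := 4*k+1) a b
  rcases natCast_eq_add_cycDist_or ha hb with h | h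
  · rw [h]
    exact dist_inr_inr_add_le hk _ (by omega)
  · rw [SimpleGraph.dist_comm, h]
    exact dist_inr_inr_add_le hk _ (by omega)

theorem dist_inr_inl (hk : 1 ≤ k) {a b : ℕ} (ha : a < 4*k+1) (hb : b < 4*k+1) :
    (GP (4*k+1) 2).dist (inr (a : ZMod (4*k+1))) (inl (b : ZMod (4*k+1))) =
      uvDist (cycDist (4*k+1) a b) := by
  rw [SimpleGraph.dist_comm, dist_inl_inr hk hb ha, cycDist, cycDist, Nat.dist_comm]

def resolvingSet (k : ℕ) : Set (ZMod (4*k+1) ⊕ ZMod (4*k+1)) :=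
  {x | ∃ i : ℕ, i ≤ k - 1 ∧ x = Sum.inl ((2*i + 1 : ℕ) : ZMod (4*k+1))} ∪
  {x | ∃ i : ℕ, i ≤ 2*k ∧ x = Sum.inl ((2*k + i : ℕ) : ZMod (4*k+1))} ∪
  {x | ∃ i : ℕ, i ≤ 2*k + 3 ∧ x = Sum.inr ((i : ℕ) : ZMod (4*k+1))}

theorem inl_mem_resolvingSet {m : ℕ} (hm : m % 2 = 1 ∧ m < 2*k ∨ 2*k ≤ m ∧ m ≤ 4*k) :
    inl (m : ZMod (4*k+1)) ∈ resolvingSet k := by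
  rcases hm with hm | hm
  · exact .inl (.inl ⟨m / 2, by omega, by rw [show 2 * (m / 2) + 1 = m by omega]⟩)
  · exact .inl (.inr ⟨m - 2*k, by omega, by rw [show 2 * k + (m - 2*k) = m by omega]⟩)

theorem inr_mem_resolvingSet {m : ℕ} (hm : m ≤ 2*k + 3) :
    inr (m : ZMod (4*k+1)) ∈ resolvingSet k :=
  .inr ⟨m, hm, rfl⟩

theorem exists_resolving_inl_inl (hk : 3 ≤ k) {p q : ℕ} (hp : p % 2 = 0 ∧ p < 2*k)
    (hq : q % 2 = 0 ∧ q < 2*k) :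
    ∃ w ∈ resolvingSet k, StronglyResolves (GP (4*k+1) 2) w
      (inl (p : ZMod (4*k+1))) (inl (q : ZMod (4*k+1))) := by
  refine ⟨inl ((max p q + 1 : ℕ) : ZMod (4*k+1)), inl_mem_resolvingSet (by omega), ?_⟩
  simp (disch := omega) only [StronglyResolves, dist_inl_inl, uuDist, cycDist, Nat.dist]
  omega

theorem exists_resolving_inl_inr (hk : 3 ≤ k) {p q : ℕ} (hp : p % 2 = 0 ∧ p < 2*k)
    (hq : 2*k + 4 ≤ q ∧ q < 4*k+1) :
    ∃ w ∈ resolvingSet k, StronglyResolves (GP (4*k+1) 2) w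
      (inl (p : ZMod (4*k+1))) (inr (q : ZMod (4*k+1))) := by
  -- going forwards around the outer cycle, `u_p` is `4k + 1 - (q - p)` steps after `u_q`
  by_cases hfar : q ≤ 4*k - 3 + p
  · refine ⟨inl (q : ZMod (4*k+1)), inl_mem_resolvingSet (by omega), .inl ?_⟩
    simp (disch := omega) only [dist_inl_inl, dist_inl_inr, dist_inr_inl, uuDist,
      uvDist, cycDist, Nat.dist]
    omega
  by_cases htwo : q = 4*k - 1 + p
  · refine ⟨inl ((p + 1 : ℕ) : ZMod (4*k+1)), inl_mem_resolvingSet (by omega), .inr ?_⟩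
    simp (disch := omega) only [dist_inl_inl, dist_inl_inr, uuDist, uvDist, cycDist,
      Nat.dist]
    omega
  · refine ⟨inr (p : ZMod (4*k+1)), inr_mem_resolvingSet (by omega), .inr ?_⟩
    simp (disch := omega) only [dist_inr_inl, dist_inr_inr, dist_inl_inr, uvDist,
      vvDist]
    split_ifs <;> simp only [cycDist, Nat.dist] at * <;> omega

theorem exists_resolving_inr_inr (hk : 3 ≤ k) {p q : ℕ} (hp : 2*k + 4 ≤ p ∧ p < 4*k+1)
    (hq : 2*k + 4 ≤ q ∧ q < 4*k+1) :
    ∃ w ∈ resolvingSet k, StronglyResolves (GP (4*k+1) 2) w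
      (inr (p : ZMod (4*k+1))) (inr (q : ZMod (4*k+1))) := by
  wlog hpq : p ≤ q generalizing p q
  · exact (this hq hp (by omega)).imp fun _ ⟨hw, h⟩ => ⟨hw, h.symm⟩
  by_cases heven : (q - p) % 2 = 0
  · refine ⟨inl (q : ZMod (4*k+1)), inl_mem_resolvingSet (by omega), .inl ?_⟩
    simp (disch := omega) only [dist_inl_inr, dist_inr_inr, uvDist, vvDist]
    split_ifs <;> simp only [cycDist, Nat.dist] at * <;> omega
  · obtain ⟨r, hr, hqr⟩ : ∃ r ≤ 1, (q + r) % 2 = 1 := ⟨(q + 1) % 2, by omega, by omega⟩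
    refine ⟨inr (r : ZMod (4*k+1)), inr_mem_resolvingSet (by omega), .inl ?_⟩
    have hrp : cycDist (4*k+1) r p = 4*k+1 + r - p := by unfold cycDist Nat.dist; omega
    have hrq : cycDist (4*k+1) r q = 4*k+1 + r - q := by unfold cycDist Nat.dist; omega
    have hqp : cycDist (4*k+1) q p = q - p := by unfold cycDist Nat.dist; omega
    simp (disch := omega) only [dist_inr_inr, hrp, hrq, hqp, vvDist]
    split_ifs <;> omega

theorem exists_resolving_of_not_mem (hk : 3 ≤ k) {x y : ZMod (4*k+1) ⊕ ZMod (4*k+1)}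
    (hx : x ∉ resolvingSet k) (hy : y ∉ resolvingSet k) :
    ∃ w ∈ resolvingSet k, StronglyResolves (GP (4*k+1) 2) w x y := by
  have hcast (i : ZMod (4*k+1)) : ∃ p < 4*k+1, i = p :=
    ⟨i.val, i.val_lt, (ZMod.natCast_zmod_val i).symm⟩
  have hinl {p : ℕ} (hp : p < 4*k+1) (h : inl (p : ZMod (4*k+1)) ∉ resolvingSet k) :
      p % 2 = 0 ∧ p < 2*k := by
    by_contra hc
    exact h (inl_mem_resolvingSet (by omega))
  have hinr {p : ℕ} (hp : p < 4*k+1) (h : inr (p : ZMod (4*k+1)) ∉ resolvingSet k) :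
      2*k + 4 ≤ p ∧ p < 4*k+1 := by
    by_contra hc
    exact h (inr_mem_resolvingSet (by omega))
  rcases x with i | i <;> rcases y with j | j <;>
    obtain ⟨p, hp, rfl⟩ := hcast i <;> obtain ⟨q, hq, rfl⟩ := hcast j
  · exact exists_resolving_inl_inl hk (hinl hp hx) (hinl hq hy)
  · exact exists_resolving_inl_inr hk (hinl hp hx) (hinr hq hy)
  · exact (exists_resolving_inl_inr hk (hinl hq hy) (hinr hp hx)).imp
      fun _ ⟨hw, h⟩ => ⟨hw, h.symm⟩
  · exact exists_resolving_inr_inr hk (hinr hp hx) (hinr hq hy)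

end FourKPlusOne

end GP

/-- For `k ≥ 3`, `S = {u_{2i+1} : 0 ≤ i ≤ k−1} ∪ {u_{2k+i} : 0 ≤ i ≤ 2k} ∪
{vᵢ : 0 ≤ i ≤ 2k+3}` is a strong resolving set of `GP (4k+1) 2`. -/
theorem stmt_14 (k : ℕ) (hk : 3 ≤ k) :
    IsStrongResolvingSet (GP (4*k+1) 2)
      ({x | ∃ i : ℕ, i ≤ k - 1 ∧ x = Sum.inl ((2*i + 1 : ℕ) : ZMod (4*k+1))} ∪
       {x | ∃ i : ℕ, i ≤ 2*k ∧ x = Sum.inl ((2*k + i : ℕ) : ZMod (4*k+1))} ∪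
       {x | ∃ i : ℕ, i ≤ 2*k + 3 ∧ x = Sum.inr ((i : ℕ) : ZMod (4*k+1))}) := by
  change IsStrongResolvingSet _ (GP.resolvingSet k)
  intro x y _
  by_cases hx : x ∈ GP.resolvingSet k
  · exact ⟨x, hx, .inr (by rw [dist_self, zero_add])⟩
  by_cases hy : y ∈ GP.resolvingSet k
  · exact ⟨y, hy, .inl (by rw [dist_self, zero_add])⟩
  exact GP.exists_resolving_of_not_mem hk hx hy
end

section
/- The strong metric dimension of the Petersen graph GP(5,2) equals 8, with {u_0,u_1,u_2,u_3,v_0,v_1,v_2,v_3} being a strong metric basis. -/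
/-!
Two vertices that are mutually maximally distant can be strongly resolved only by one of
themselves, so every strong resolving set contains one of them. In a connected graph of diameter
two every non-adjacent pair is at maximal distance, hence the complement of a strong resolving set
is a clique. The Petersen graph has diameter two and no triangles, so such a complement has at
most two vertices and a strong resolving set at least eight; conversely the complement `{u₄, v₄}`
of the given set is an edge, and that pair is strongly resolved by `u₀`.
-/
namespace SimpleGraph

variable {V : Type*} {G : SimpleGraph V} {u v w : V} {S : Set V}

lemma Reachable.exists_adj_dist_add_one_eq (h : G.Reachable v w) (hne : v ≠ w) :
    ∃ x, G.Adj v x ∧ G.dist x w + 1 = G.dist v w := by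
  obtain ⟨p, hp⟩ := h.exists_walk_length_eq_dist
  cases p with
  | nil => exact absurd rfl hne
  | cons hadj q =>
    refine ⟨_, hadj, le_antisymm ?_ ?_⟩
    · simpa [← hp] using dist_le q
    · simpa [dist_eq_one_iff_adj.mpr hadj, add_comm] using hadj.reachable.dist_triangle_left w

lemma exists_walk_length_le_two (h : ∀ u v, u ≠ v → ¬G.Adj u v → ∃ w, G.Adj u w ∧ G.Adj w v)
    (u v : V) : ∃ p : G.Walk u v, p.length ≤ 2 := by
  by_cases huv : u = v
  · subst huv; exact ⟨.nil, by simp⟩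
  by_cases hadj : G.Adj u v
  · exact ⟨hadj.toWalk, by simp⟩
  obtain ⟨w, huw, hwv⟩ := h u v huv hadj
  exact ⟨huw.toWalk.append hwv.toWalk, by simp⟩

lemma dist_eq_two_of_not_adj (hG : G.Connected) (hdiam : ∀ x y, G.dist x y ≤ 2) (hne : u ≠ v)
    (hna : ¬G.Adj u v) : G.dist u v = 2 := by
  have h0 : G.dist u v ≠ 0 := dist_ne_zero_iff_ne_and_reachable.mpr ⟨hne, hG u v⟩
  have h1 : G.dist u v ≠ 1 := fun h => hna (dist_eq_one_iff_adj.mp h)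
  have := hdiam u v
  omega

lemma IsClique.ncard_le_two_of_cliqueFree_three (hG : G.CliqueFree 3) (hs : G.IsClique S)
    (hfin : S.Finite) : S.ncard ≤ 2 := by
  classical
  by_contra! h
  obtain ⟨a, b, c, ha, hb, hc, hab, hac, hbc⟩ := (Set.two_lt_ncard_iff hfin).mp h
  exact hG {a, b, c} (is3Clique_triple_iff.mpr ⟨hs ha hb hab, hs ha hc hac, hs hb hc hbc⟩)

end SimpleGraph

section StrongResolving

open SimpleGraph

variable {V : Type*} {G : SimpleGraph V} {u v w : V} {S : Set V}

lemma stronglyResolves_comm : StronglyResolves G w u v ↔ StronglyResolves G w v u := Or.comm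

lemma stronglyResolves_self_left : StronglyResolves G u u v := Or.inr (by simp)

lemma isStrongResolvingSet_of_forall_notMem
    (h : ∀ u v, u ∉ S → v ∉ S → u ≠ v → ∃ w ∈ S, StronglyResolves G w u v) :
    IsStrongResolvingSet G S := by
  intro u v hne
  by_cases hu : u ∈ S
  · exact ⟨u, hu, stronglyResolves_self_left⟩
  by_cases hv : v ∈ S
  · exact ⟨v, hv, stronglyResolves_comm.mp stronglyResolves_self_left⟩
  exact h u v hu hv hne

lemma MutuallyMaximallyDistant.symm (h : MutuallyMaximallyDistant G u v) :
    MutuallyMaximallyDistant G v u := by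
  obtain ⟨hne, hu, hv⟩ := h
  exact ⟨hne.symm, fun x hx => by simpa only [dist_comm] using hv x hx,
    fun x hx => by simpa only [dist_comm] using hu x hx⟩

lemma mutuallyMaximallyDistant_of_forall_dist_le (hne : u ≠ v)
    (h : ∀ x y, G.dist x y ≤ G.dist u v) : MutuallyMaximallyDistant G u v :=
  ⟨hne, fun x _ => h x v, fun x _ => h u x⟩

/-- If `v` lay on a shortest `w`–`u` path with `w ≠ v`, the neighbour of `v` one step closer
to `w` would be farther from `u` than `v` is. -/
lemma MutuallyMaximallyDistant.eq_of_dist_eq_add (hG : G.Connected)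
    (h : MutuallyMaximallyDistant G u v) (hw : G.dist w u = G.dist w v + G.dist v u) :
    w = v := by
  by_contra hwv
  obtain ⟨x, hvx, hx⟩ := (hG v w).exists_adj_dist_add_one_eq (Ne.symm hwv)
  have htri : G.dist u w ≤ G.dist u x + G.dist x w := hG.dist_triangle
  have hmax : G.dist u x ≤ G.dist u v := h.2.2 x hvx
  rw [dist_comm (u := w) (v := u), dist_comm (u := w) (v := v), dist_comm (u := v) (v := u)] at hw
  omega

lemma MutuallyMaximallyDistant.eq_or_eq_of_stronglyResolves (hG : G.Connected)
    (h : MutuallyMaximallyDistant G u v) (hw : StronglyResolves G w u v) : w = u ∨ w = v := by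
  rcases hw with hw | hw
  · exact Or.inr (h.eq_of_dist_eq_add hG hw)
  · exact Or.inl (h.symm.eq_of_dist_eq_add hG hw)

lemma MutuallyMaximallyDistant.mem_or_mem (hG : G.Connected) (h : MutuallyMaximallyDistant G u v)
    (hS : IsStrongResolvingSet G S) : u ∈ S ∨ v ∈ S := by
  obtain ⟨w, hwS, hw⟩ := hS u v h.1
  rcases h.eq_or_eq_of_stronglyResolves hG hw with rfl | rfl
  exacts [Or.inl hwS, Or.inr hwS]

lemma IsStrongResolvingSet.isClique_compl (hG : G.Connected) (hdiam : ∀ x y, G.dist x y ≤ 2)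
    (hS : IsStrongResolvingSet G S) : G.IsClique Sᶜ := by
  intro u hu v hv hne
  by_contra hna
  have hmmd : MutuallyMaximallyDistant G u v := by
    refine mutuallyMaximallyDistant_of_forall_dist_le hne fun x y => ?_
    rw [dist_eq_two_of_not_adj hG hdiam hne hna]
    exact hdiam x y
  exact (hmmd.mem_or_mem hG hS).elim hu hv

lemma IsStrongResolvingSet.card_sub_two_le_ncard [Finite V] (hG : G.Connected)
    (hdiam : ∀ x y, G.dist x y ≤ 2) (hcf : G.CliqueFree 3) (hS : IsStrongResolvingSet G S) :
    Nat.card V - 2 ≤ S.ncard := by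
  have hcompl := (hS.isClique_compl hG hdiam).ncard_le_two_of_cliqueFree_three hcf Sᶜ.toFinite
  have := Set.ncard_add_ncard_compl S
  omega

lemma sdim_eq_ncard (hS : IsStrongResolvingSet G S)
    (hmin : ∀ T, IsStrongResolvingSet G T → S.ncard ≤ T.ncard) : sdim G = S.ncard :=
  le_antisymm (Nat.sInf_le ⟨S, hS, rfl⟩)
    (le_csInf ⟨_, S, hS, rfl⟩ (by rintro _ ⟨T, hT, rfl⟩; exact hmin T hT))

end StrongResolving

instance (n k : ℕ) : DecidableRel (GP n k).Adj
  | Sum.inl i, Sum.inl j => inferInstanceAs (Decidable (i ≠ j ∧ (j = i + 1 ∨ i = j + 1)))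
  | Sum.inl i, Sum.inr j => inferInstanceAs (Decidable (i = j))
  | Sum.inr i, Sum.inl j => inferInstanceAs (Decidable (i = j))
  | Sum.inr i, Sum.inr j =>
      inferInstanceAs (Decidable (i ≠ j ∧ (j = i + (k : ZMod n) ∨ i = j + (k : ZMod n))))

namespace GP

open SimpleGraph

lemma five_two_exists_common_adj : ∀ u v : ZMod 5 ⊕ ZMod 5, u ≠ v → ¬(GP 5 2).Adj u v →
    ∃ w, (GP 5 2).Adj u w ∧ (GP 5 2).Adj w v := by
  decide

lemma five_two_connected : (GP 5 2).Connected :=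
  .mk fun u v => (exists_walk_length_le_two five_two_exists_common_adj u v).elim fun p _ => ⟨p⟩

lemma five_two_dist_le_two (u v : ZMod 5 ⊕ ZMod 5) : (GP 5 2).dist u v ≤ 2 :=
  (exists_walk_length_le_two five_two_exists_common_adj u v).elim fun p hp => (dist_le p).trans hp

lemma five_two_cliqueFree_three : (GP 5 2).CliqueFree 3 := by
  classical
  have : ∀ a b c : ZMod 5 ⊕ ZMod 5,
      (GP 5 2).Adj a b → (GP 5 2).Adj a c → (GP 5 2).Adj b c → False := by decide
  intro s hs
  obtain ⟨a, b, c, hab, hac, hbc, -⟩ := is3Clique_iff.mp hs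
  exact this a b c hab hac hbc

lemma five_two_stronglyResolves_spoke :
    StronglyResolves (GP 5 2) (Sum.inl 0) (Sum.inl 4) (Sum.inr 4) := by
  have h04 : (GP 5 2).Adj (Sum.inl 0) (Sum.inl 4) := by decide
  have h44 : (GP 5 2).Adj (Sum.inl 4) (Sum.inr 4) := by decide
  right
  rw [dist_eq_two_of_not_adj five_two_connected five_two_dist_le_two (by decide) (by decide),
    dist_eq_one_iff_adj.mpr h04, dist_eq_one_iff_adj.mpr h44]

end GP

/-- `sdim (GP 5 2) = 8`, and `{u₀,u₁,u₂,u₃,v₀,v₁,v₂,v₃}` is a strong metric basis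
(a strong resolving set of minimum cardinality 8). -/
theorem stmt_16 :
    sdim (GP 5 2) = 8 ∧
    IsStrongResolvingSet (GP 5 2)
      {Sum.inl 0, Sum.inl 1, Sum.inl 2, Sum.inl 3, Sum.inr 0, Sum.inr 1, Sum.inr 2, Sum.inr 3} ∧
    ({Sum.inl 0, Sum.inl 1, Sum.inl 2, Sum.inl 3, Sum.inr 0, Sum.inr 1, Sum.inr 2, Sum.inr 3} :
      Set (ZMod 5 ⊕ ZMod 5)).ncard = 8 := by
  set B : Set (ZMod 5 ⊕ ZMod 5) :=
    {Sum.inl 0, Sum.inl 1, Sum.inl 2, Sum.inl 3, Sum.inr 0, Sum.inr 1, Sum.inr 2, Sum.inr 3}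
  have hB : B = {Sum.inl 4, Sum.inr 4}ᶜ := by
    ext x
    simp only [B, Set.mem_insert_iff, Set.mem_singleton_iff, Set.mem_compl_iff]
    revert x
    decide
  have hcard : B.ncard = 8 := by
    rw [hB, Set.ncard_compl]; simp
  have hres : IsStrongResolvingSet (GP 5 2) B := by
    refine isStrongResolvingSet_of_forall_notMem fun u v hu hv hne => ⟨Sum.inl 0, by decide, ?_⟩
    simp only [hB, Set.notMem_compl_iff, Set.mem_insert_iff, Set.mem_singleton_iff] at hu hv
    rcases hu with rfl | rfl <;> rcases hv with rfl | rfl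
    · exact absurd rfl hne
    · exact GP.five_two_stronglyResolves_spoke
    · exact stronglyResolves_comm.mp GP.five_two_stronglyResolves_spoke
    · exact absurd rfl hne
  refine ⟨?_, hres, hcard⟩
  rw [← hcard]
  refine sdim_eq_ncard hres fun T hT => ?_
  have := hT.card_sub_two_le_ncard GP.five_two_connected GP.five_two_dist_le_two
    GP.five_two_cliqueFree_three
  simpa [hcard] using this
end
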